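/- arXiv:2203.12959 — 2 statements merged into one kernel-verified Lean document; each statement's English description precedes it below -/
import Mathlib

section
/- Let Π ∈ Π_{q,r}. Then the set Z_r(Π) is nonempty and convex. (In fact, −Π₂₂^†Π₂₁ ∈ Z_r(Π).) -/
open Matrix
open scoped Classical

/-- The Moore–Penrose pseudoinverse of a real matrix, defined via its four
characterizing Penrose conditions (which determine it uniquely). -/
noncomputable def pinv {m n : ℕ} (A : Matrix (Fin m) (Fin n) ℝ) : Matrix (Fin n) (Fin m) ℝ :=
  if h : ∃ B : Matrix (Fin n) (Fin m) ℝ,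
      A * B * A = A ∧ B * A * B = B ∧ (A * B)ᵀ = A * B ∧ (B * A)ᵀ = B * A
  then h.choose else 0

/-- The unique positive semidefinite square root of a positive semidefinite matrix
(defined by its characterizing property, which determines it uniquely). -/
noncomputable def msqrt {n : ℕ} (A : Matrix (Fin n) (Fin n) ℝ) : Matrix (Fin n) (Fin n) ℝ :=
  if h : ∃ B : Matrix (Fin n) (Fin n) ℝ, B.PosSemidef ∧ B * B = A then h.choose else 0

/-- The quadratic matrix expression `[I; Z]ᵀ Π [I; Z]`. -/
noncomputable def qmi {q r : ℕ} (P : Matrix (Fin q ⊕ Fin r) (Fin q ⊕ Fin r) ℝ)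
    (Z : Matrix (Fin r) (Fin q) ℝ) : Matrix (Fin q) (Fin q) ℝ :=
  (fromRows (1 : Matrix (Fin q) (Fin q) ℝ) Z)ᵀ * P * fromRows 1 Z

/-- The solution set `Z_r(Π)` of the nonstrict QMI. -/
def ZrSet {q r : ℕ} (P : Matrix (Fin q ⊕ Fin r) (Fin q ⊕ Fin r) ℝ) :
    Set (Matrix (Fin r) (Fin q) ℝ) := {Z | (qmi P Z).PosSemidef}

/-- The solution set `Z_r⁺(Π)` of the strict QMI. -/
def ZrPlusSet {q r : ℕ} (P : Matrix (Fin q ⊕ Fin r) (Fin q ⊕ Fin r) ℝ) :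
    Set (Matrix (Fin r) (Fin q) ℝ) := {Z | (qmi P Z).PosDef}

/-- The solution set `Z_r⁰(Π)` of the quadratic matrix equality. -/
def ZrZeroSet {q r : ℕ} (P : Matrix (Fin q ⊕ Fin r) (Fin q ⊕ Fin r) ℝ) :
    Set (Matrix (Fin r) (Fin q) ℝ) := {Z | qmi P Z = 0}

/-- Generalized Schur complement `Π|Π₂₂ = Π₁₁ − Π₁₂ Π₂₂^† Π₂₁`. -/
noncomputable def schurC {q r : ℕ} (P : Matrix (Fin q ⊕ Fin r) (Fin q ⊕ Fin r) ℝ) :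
    Matrix (Fin q) (Fin q) ℝ :=
  P.toBlocks₁₁ - P.toBlocks₁₂ * pinv P.toBlocks₂₂ * P.toBlocks₂₁

/-- Membership in the class `Π_{q,r}`: symmetric, `Π₂₂ ⪯ 0`, `Π|Π₂₂ ⪰ 0`,
and `ker Π₂₂ ⊆ ker Π₁₂`. -/
def memPi {q r : ℕ} (P : Matrix (Fin q ⊕ Fin r) (Fin q ⊕ Fin r) ℝ) : Prop :=
  P.IsSymm ∧ (-P.toBlocks₂₂).PosSemidef ∧ (schurC P).PosSemidef ∧
    ∀ x : Fin r → ℝ, P.toBlocks₂₂ *ᵥ x = 0 → P.toBlocks₁₂ *ᵥ x = 0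

/-!
Expanding, `[I; Z]ᵀ Π [I; Z] = Π₁₁ + Zᵀ Π₂₁ + Π₁₂ Z + Zᵀ Π₂₂ Z`. Along a segment `a Z₁ + b Z₂`
the defect from linearity is `a b (Z₁ - Z₂)ᵀ (-Π₂₂) (Z₁ - Z₂) ⪰ 0`, so `Z ↦ [I; Z]ᵀ Π [I; Z]` is
concave for the Loewner order and its superlevel set `Z_r(Π)` is convex. At `Z₀ = -Π₂₂^† Π₂₁`
the identity `Π₂₂^† Π₂₂ Π₂₂^† = Π₂₂^†` collapses the expression to the Schur complement `Π|Π₂₂`.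
For symmetric `Π₂₂` the pseudoinverse is `f(Π₂₂)` with `f x = x⁻¹` (and `0⁻¹ = 0`) in the
continuous functional calculus, which yields its Penrose identities and its symmetry.
-/

namespace Matrix

section MoorePenrose

variable {m n R : Type*} [Fintype m] [Fintype n] [CommRing R]

def IsMoorePenroseInverse (A : Matrix m n R) (B : Matrix n m R) : Prop :=
  A * B * A = A ∧ B * A * B = B ∧ (A * B)ᵀ = A * B ∧ (B * A)ᵀ = B * A

theorem IsMoorePenroseInverse.unique {A : Matrix m n R} {B C : Matrix n m R}
    (hB : IsMoorePenroseInverse A B) (hC : IsMoorePenroseInverse A C) : B = C := by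
  obtain ⟨hB₁, hB₂, hB₃, hB₄⟩ := hB
  obtain ⟨hC₁, hC₂, hC₃, hC₄⟩ := hC
  have hAB : A * B = A * C :=
    calc A * B = (A * C * A * B)ᵀ := by rw [hC₁, hB₃]
    _ = (A * B)ᵀ * (A * C)ᵀ := by rw [← transpose_mul]; simp only [Matrix.mul_assoc]
    _ = A * C := by rw [hB₃, hC₃, ← Matrix.mul_assoc, hB₁]
  have hBA : B * A = C * A :=
    calc B * A = (B * (A * C * A))ᵀ := by rw [hC₁, hB₄]
    _ = (C * A)ᵀ * (B * A)ᵀ := by rw [← transpose_mul]; simp only [Matrix.mul_assoc]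
    _ = C * A := by rw [hC₄, hB₄, Matrix.mul_assoc, ← Matrix.mul_assoc A, hB₁]
  calc B = B * A * B := hB₂.symm
  _ = C * A * C := by rw [Matrix.mul_assoc, hAB, ← Matrix.mul_assoc, hBA]
  _ = C := hC₂

end MoorePenrose

theorem IsHermitian.isMoorePenroseInverse_cfc_inv {n : Type*} [Fintype n] [DecidableEq n]
    {A : Matrix n n ℝ} (hA : A.IsHermitian) :
    IsMoorePenroseInverse A (cfc (·⁻¹ : ℝ → ℝ) A) := by
  have hcont (f : ℝ → ℝ) : ContinuousOn f (spectrum ℝ A) := A.finite_real_spectrum.continuousOn f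
  have hmul (f g : ℝ → ℝ) : cfc f A * cfc g A = cfc (fun x ↦ f x * g x) A :=
    (cfc_mul f g A (hcont f) (hcont g)).symm
  have hsymm (f : ℝ → ℝ) : (cfc f A)ᵀ = cfc f A :=
    (isHermitian_iff_isSymm.mp (cfc_predicate f A)).eq
  have hid : cfc (fun x : ℝ ↦ x) A = A := cfc_id' ℝ A hA
  have hAB : A * cfc (·⁻¹ : ℝ → ℝ) A = cfc (fun x : ℝ ↦ x * x⁻¹) A := by rw [← hmul, hid]
  have hBA : cfc (·⁻¹ : ℝ → ℝ) A * A = cfc (fun x : ℝ ↦ x⁻¹ * x) A := by rw [← hmul, hid]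
  refine ⟨?_, ?_, by rw [hAB, hsymm], by rw [hBA, hsymm]⟩
  · calc A * cfc (·⁻¹) A * A = cfc (fun x : ℝ ↦ x * x⁻¹) A * cfc (fun x ↦ x) A := by rw [hAB, hid]
    _ = A := by rw [hmul]; exact (cfc_congr fun x _ ↦ mul_inv_mul_cancel x).trans hid
  · rw [hBA, hmul]
    exact cfc_congr fun x _ ↦ by simpa using mul_inv_mul_cancel x⁻¹

theorem isMoorePenroseInverse_pinv_of_exists {m n : ℕ} {A : Matrix (Fin m) (Fin n) ℝ}
    (h : ∃ B, IsMoorePenroseInverse A B) : IsMoorePenroseInverse A (pinv A) := by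
  unfold IsMoorePenroseInverse at h ⊢
  rw [pinv, dif_pos h]
  exact h.choose_spec

theorem IsHermitian.isMoorePenroseInverse_pinv {n : ℕ} {A : Matrix (Fin n) (Fin n) ℝ}
    (hA : A.IsHermitian) : IsMoorePenroseInverse A (pinv A) :=
  isMoorePenroseInverse_pinv_of_exists ⟨_, hA.isMoorePenroseInverse_cfc_inv⟩

theorem IsHermitian.pinv_eq_cfc_inv {n : ℕ} {A : Matrix (Fin n) (Fin n) ℝ} (hA : A.IsHermitian) :
    pinv A = cfc (·⁻¹ : ℝ → ℝ) A :=
  hA.isMoorePenroseInverse_pinv.unique hA.isMoorePenroseInverse_cfc_inv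

theorem IsHermitian.pinv_transpose {n : ℕ} {A : Matrix (Fin n) (Fin n) ℝ} (hA : A.IsHermitian) :
    (pinv A)ᵀ = pinv A := by
  rw [hA.pinv_eq_cfc_inv]
  exact (isHermitian_iff_isSymm.mp (cfc_predicate _ A)).eq

end Matrix

section QMI

variable {q r : ℕ} (P : Matrix (Fin q ⊕ Fin r) (Fin q ⊕ Fin r) ℝ)

theorem qmi_eq_toBlocks (Z : Matrix (Fin r) (Fin q) ℝ) :
    qmi P Z = P.toBlocks₁₁ + Zᵀ * P.toBlocks₂₁ + P.toBlocks₁₂ * Z + Zᵀ * P.toBlocks₂₂ * Z := by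
  conv_lhs => rw [qmi, ← P.fromBlocks_toBlocks]
  rw [transpose_fromRows, transpose_one, fromCols_mul_fromBlocks]
  -- `qmi` was elaborated with the (defeq) `CStarMatrix` product instance, hence `erw`
  erw [fromCols_mul_fromRows]
  simp only [Matrix.one_mul, Matrix.mul_one, Matrix.add_mul]
  abel

theorem qmi_neg_pinv_mul_toBlocks₂₁ (hP : P.IsSymm) :
    qmi P (-(pinv P.toBlocks₂₂ * P.toBlocks₂₁)) = schurC P := by
  rw [← P.fromBlocks_toBlocks, isSymm_fromBlocks_iff] at hP
  obtain ⟨-, -, h₂₁, h₂₂⟩ := hP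
  have hA : P.toBlocks₂₂.IsHermitian := isHermitian_iff_isSymm.mpr h₂₂
  have hBAB : pinv P.toBlocks₂₂ * (P.toBlocks₂₂ * (pinv P.toBlocks₂₂ * P.toBlocks₂₁))
      = pinv P.toBlocks₂₂ * P.toBlocks₂₁ := by
    rw [← Matrix.mul_assoc, ← Matrix.mul_assoc, hA.isMoorePenroseInverse_pinv.2.1]
  rw [qmi_eq_toBlocks, schurC, transpose_neg, transpose_mul, hA.pinv_transpose, h₂₁]
  simp only [Matrix.neg_mul, Matrix.mul_neg, neg_neg, Matrix.mul_assoc, hBAB]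
  abel

open scoped MatrixOrder in
theorem concaveOn_qmi (h : (-P.toBlocks₂₂).PosSemidef) : ConcaveOn ℝ Set.univ (qmi P) := by
  refine ⟨convex_univ, fun Z₁ _ Z₂ _ a b ha hb hab ↦ ?_⟩
  rw [le_iff]
  have hcombo : qmi P (a • Z₁ + b • Z₂) - (a • qmi P Z₁ + b • qmi P Z₂)
      = (a * b) • ((Z₁ - Z₂)ᵀ * -P.toBlocks₂₂ * (Z₁ - Z₂)) := by
    obtain rfl : b = 1 - a := by linarith
    simp only [qmi_eq_toBlocks, transpose_add, transpose_smul, transpose_sub,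
      Matrix.add_mul, Matrix.mul_add, Matrix.sub_mul, Matrix.mul_sub, Matrix.smul_mul,
      Matrix.mul_smul, Matrix.neg_mul, Matrix.mul_neg, smul_add, smul_sub, smul_neg, smul_smul]
    module
  rw [hcombo]
  exact (h.conjTranspose_mul_mul_same (Z₁ - Z₂)).smul (mul_nonneg ha hb)

open scoped MatrixOrder in
theorem convex_ZrSet (h : (-P.toBlocks₂₂).PosSemidef) : Convex ℝ (ZrSet P) := by
  convert (concaveOn_qmi P h).convex_ge 0 using 1
  ext Z
  simp [ZrSet, nonneg_iff_posSemidef]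

end QMI

/-- For `Π ∈ Π_{q,r}`, the set `Z_r(Π)` is nonempty and convex;
in fact `−Π₂₂^†Π₂₁ ∈ Z_r(Π)`. -/
theorem stmt_0 {q r : ℕ} (P : Matrix (Fin q ⊕ Fin r) (Fin q ⊕ Fin r) ℝ) (hP : memPi P) :
    (ZrSet P).Nonempty ∧ Convex ℝ (ZrSet P) ∧
      -(pinv P.toBlocks₂₂ * P.toBlocks₂₁) ∈ ZrSet P := by
  obtain ⟨hsymm, hneg, hschur, -⟩ := hP
  have hmem : -(pinv P.toBlocks₂₂ * P.toBlocks₂₁) ∈ ZrSet P := by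
    show (qmi P _).PosSemidef
    rwa [qmi_neg_pinv_mul_toBlocks₂₁ P hsymm]
  exact ⟨⟨_, hmem⟩, convex_ZrSet P hneg, hmem⟩
end

section
/- Let N ∈ Π_{q,r}. Let x ∈ ℝ^q and y ∈ ℝ^r be vectors with x nonzero such that [x; y]ᵀ N [x; y] ≥ 0. Then there exists a matrix Z ∈ Z_r(N) such that y = Zx. -/
open Matrix
open scoped Classical

/-!
Completing the square with the generalized Schur complement `S = N|N₂₂` gives
`[p; w]ᵀ N [p; w] = pᵀ S p + (w + G p)ᵀ N₂₂ (w + G p)` with `G = N₂₂^† N₂₁`; the kernel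
condition `ker N₂₂ ⊆ ker N₁₂` is what makes `N₂₂ G = N₂₁`. With `u = y + G x` the hypothesis
reads `xᵀ S x + uᵀ N₂₂ u ≥ 0`, and `Z = u aᵀ - G` lies in `Z_r(N)` with `Z x = y` as soon as
`aᵀ x = 1` and `vᵀ S v + (aᵀ v)² uᵀ N₂₂ u ≥ 0` for all `v`. Take `a = S x / xᵀ S x`, which
works by Cauchy–Schwarz for `S`, or `a = x / ‖x‖²` when `xᵀ S x = 0` (then `uᵀ N₂₂ u = 0`).
-/

lemma exists_penrose_of_isHermitian {n : Type*} [Fintype n] [DecidableEq n]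
    {A : Matrix n n ℝ} (hA : A.IsHermitian) :
    ∃ B : Matrix n n ℝ,
      A * B * A = A ∧ B * A * B = B ∧ (A * B)ᵀ = A * B ∧ (B * A)ᵀ = B * A := by
  have hc : ∀ f : ℝ → ℝ, ContinuousOn f (spectrum ℝ A) := (finite_spectrum A).continuousOn
  have hid : cfc (fun t => t) A = A := cfc_id' ℝ A hA
  have hmul : ∀ f g : ℝ → ℝ, cfc f A * cfc g A = cfc (fun t => f t * g t) A := fun f g =>
    (cfc_mul f g A (hc f) (hc g)).symm
  have hmul_left : ∀ f : ℝ → ℝ, A * cfc f A = cfc (fun t => t * f t) A := fun f => by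
    simpa only [hid] using hmul (fun t => t) f
  have hmul_right : ∀ f : ℝ → ℝ, cfc f A * A = cfc (fun t => f t * t) A := fun f => by
    simpa only [hid] using hmul f (fun t => t)
  have hsymm : ∀ f : ℝ → ℝ, (cfc f A)ᵀ = cfc f A := fun f =>
    (conjTranspose_eq_transpose_of_trivial _).symm.trans IsSelfAdjoint.cfc
  have hinv : ∀ t : ℝ, t * t⁻¹ * t = t ∧ t⁻¹ * t * t⁻¹ = t⁻¹ := fun t => by
    rcases eq_or_ne t 0 with rfl | ht
    · simp
    · constructor <;> field_simp
  refine ⟨cfc (fun t : ℝ => t⁻¹) A, ?_, ?_, ?_, ?_⟩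
  · rw [hmul_left, hmul_right]; simpa only [hinv] using hid
  · rw [hmul_right, hmul]; simp only [hinv]
  · rw [hmul_left, hsymm]
  · rw [hmul_right, hsymm]

lemma pinv_spec {n : ℕ} {A : Matrix (Fin n) (Fin n) ℝ} (hA : A.IsHermitian) :
    A * pinv A * A = A ∧ pinv A * A * pinv A = pinv A ∧
      (A * pinv A)ᵀ = A * pinv A ∧ (pinv A * A)ᵀ = pinv A * A := by
  have hex := exists_penrose_of_isHermitian hA
  rw [pinv, dif_pos hex]
  exact hex.choose_spec

section CompletingTheSquare

variable {R m n : Type*} [CommRing R] [Fintype n]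

lemma mul_mul_transpose_eq_of_ker_le {D M : Matrix n n R} {B : Matrix m n R} (hD : D.IsSymm)
    (hDMD : D * M * D = D) (hDM : (D * M)ᵀ = D * M)
    (hker : ∀ v, D *ᵥ v = 0 → B *ᵥ v = 0) : D * M * Bᵀ = Bᵀ := by
  have hDDM : D * (D * M) = D := by
    simpa only [transpose_mul, hDM, hD.eq] using congrArg transpose hDMD
  have hB : B * (D * M) = B := by
    refine (Matrix.toLin'.injective (LinearMap.ext fun v => ?_)).symm
    have hv : D *ᵥ (v - (D * M) *ᵥ v) = 0 := by
      rw [mulVec_sub, mulVec_mulVec, hDDM, sub_self]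
    simpa only [toLin'_apply, mulVec_sub, mulVec_mulVec, sub_eq_zero] using hker _ hv
  calc D * M * Bᵀ = (B * (D * M))ᵀ := by rw [transpose_mul, hDM]
    _ = Bᵀ := by rw [hB]

lemma sumElim_dotProduct_fromBlocks_mulVec [Fintype m] {A : Matrix m m R} {B : Matrix m n R}
    {D M : Matrix n n R} (hD : D.IsSymm) (hDMB : D * M * Bᵀ = Bᵀ) (p : m → R) (w : n → R) :
    Sum.elim p w ⬝ᵥ fromBlocks A B Bᵀ D *ᵥ Sum.elim p w =
      p ⬝ᵥ (A - B * M * Bᵀ) *ᵥ p + (w + (M * Bᵀ) *ᵥ p) ⬝ᵥ D *ᵥ (w + (M * Bᵀ) *ᵥ p) := by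
  set g := (M * Bᵀ) *ᵥ p
  have hDg : D *ᵥ g = Bᵀ *ᵥ p := by rw [mulVec_mulVec, ← Matrix.mul_assoc, hDMB]
  have hB : ∀ z, p ⬝ᵥ B *ᵥ z = (Bᵀ *ᵥ p) ⬝ᵥ z := fun z => by
    rw [dotProduct_mulVec, mulVec_transpose]
  have hgD : ∀ z, g ⬝ᵥ D *ᵥ z = (Bᵀ *ᵥ p) ⬝ᵥ z := fun z => by
    rw [dotProduct_mulVec, ← mulVec_transpose, hD.eq, hDg]
  have hBMB : (A - B * M * Bᵀ) *ᵥ p = A *ᵥ p - B *ᵥ g := by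
    rw [sub_mulVec, Matrix.mul_assoc, ← mulVec_mulVec]
  rw [fromBlocks_mulVec, sumElim_dotProduct_sumElim, hBMB]
  simp only [Sum.elim_comp_inl, Sum.elim_comp_inr, mulVec_add, dotProduct_add, add_dotProduct,
    dotProduct_sub, hB, hgD, dotProduct_comm w, hDg]
  rw [dotProduct_comm g]
  ring

end CompletingTheSquare

namespace Matrix.PosSemidef

variable {n : Type*} [Fintype n] {S : Matrix n n ℝ}

lemma dotProduct_mulVec_sq_le (hS : S.PosSemidef) (x v : n → ℝ) :
    (v ⬝ᵥ S *ᵥ x) ^ 2 ≤ (x ⬝ᵥ S *ᵥ x) * (v ⬝ᵥ S *ᵥ v) := by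
  have hsymm : x ⬝ᵥ S *ᵥ v = v ⬝ᵥ S *ᵥ x := by
    rw [dotProduct_mulVec, ← mulVec_transpose, (isHermitian_iff_isSymm.mp hS.isHermitian).eq,
      dotProduct_comm]
  have hnonneg : ∀ z, 0 ≤ (toLinearMap₂' ℝ S : LinearMap.BilinForm ℝ (n → ℝ)) z z := fun z => by
    simpa only [toLinearMap₂'_apply', star_trivial] using hS.dotProduct_mulVec_nonneg z
  have := LinearMap.BilinForm.apply_mul_apply_le_of_forall_zero_le _ hnonneg x v
  simpa only [toLinearMap₂'_apply', hsymm, ← sq] using this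

lemma exists_dotProduct_eq_one_forall_nonneg (hS : S.PosSemidef) {x : n → ℝ} (hx : x ≠ 0)
    {γ : ℝ} (hγ : γ ≤ 0) (h : 0 ≤ x ⬝ᵥ S *ᵥ x + γ) :
    ∃ a : n → ℝ, a ⬝ᵥ x = 1 ∧ ∀ v, 0 ≤ v ⬝ᵥ S *ᵥ v + (a ⬝ᵥ v) ^ 2 * γ := by
  have hS' : ∀ v, 0 ≤ v ⬝ᵥ S *ᵥ v := fun v => by
    simpa only [star_trivial] using hS.dotProduct_mulVec_nonneg v
  rcases (hS' x).eq_or_lt with hα | hα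
  · have hγ0 : γ = 0 := by linarith
    refine ⟨(x ⬝ᵥ x)⁻¹ • x, ?_, fun v => by simpa only [hγ0, mul_zero, add_zero] using hS' v⟩
    rw [smul_dotProduct, smul_eq_mul, inv_mul_cancel₀ (dotProduct_self_eq_zero.not.mpr hx)]
  · set α := x ⬝ᵥ S *ᵥ x
    refine ⟨α⁻¹ • S *ᵥ x, ?_, fun v => ?_⟩
    · rw [smul_dotProduct, dotProduct_comm, smul_eq_mul, inv_mul_cancel₀ hα.ne']
    · rw [smul_dotProduct, smul_eq_mul, dotProduct_comm (S *ᵥ x) v]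
      set s := v ⬝ᵥ S *ᵥ v
      set d := v ⬝ᵥ S *ᵥ x
      have hcs : d ^ 2 ≤ α * s := hS.dotProduct_mulVec_sq_le x v
      calc 0 ≤ s * (α + γ) / α := div_nonneg (mul_nonneg (hS' v) h) hα.le
        _ = s + α * s * γ / α ^ 2 := by field_simp
        _ ≤ s + d ^ 2 * γ / α ^ 2 := by
          gcongr s + ?_ / _
          exact mul_le_mul_of_nonpos_right hcs hγ
        _ = s + (α⁻¹ * d) ^ 2 * γ := by field_simp

end Matrix.PosSemidef

section Qmi

variable {q r : ℕ} {P : Matrix (Fin q ⊕ Fin r) (Fin q ⊕ Fin r) ℝ}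

lemma qmi_mulVec (Z : Matrix (Fin r) (Fin q) ℝ) (v : Fin q → ℝ) :
    qmi P Z *ᵥ v = (fromRows (1 : Matrix (Fin q) (Fin q) ℝ) Z)ᵀ *ᵥ P *ᵥ fromRows 1 Z *ᵥ v := by
  simp only [mulVec_mulVec, ← Matrix.mul_assoc]
  -- `qmi` was elaborated with the (defeq) `CStarMatrix` product, which `rw` cannot see through
  rfl

lemma dotProduct_qmi_mulVec (Z : Matrix (Fin r) (Fin q) ℝ) (v : Fin q → ℝ) :
    v ⬝ᵥ qmi P Z *ᵥ v = Sum.elim v (Z *ᵥ v) ⬝ᵥ P *ᵥ Sum.elim v (Z *ᵥ v) := by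
  rw [qmi_mulVec, dotProduct_mulVec, vecMul_transpose, fromRows_mulVec, one_mulVec]

lemma mem_ZrSet_iff (hP : P.IsSymm) {Z : Matrix (Fin r) (Fin q) ℝ} :
    Z ∈ ZrSet P ↔ ∀ v, 0 ≤ Sum.elim v (Z *ᵥ v) ⬝ᵥ P *ᵥ Sum.elim v (Z *ᵥ v) := by
  have hherm : (qmi P Z).IsHermitian := by
    have := isHermitian_conjTranspose_mul_mul (fromRows 1 Z) (isHermitian_iff_isSymm.mpr hP)
    rw [conjTranspose_eq_transpose_of_trivial] at this
    exact this
  simp only [ZrSet, Set.mem_ofPred_eq, posSemidef_iff_dotProduct_mulVec, hherm, true_and,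
    star_trivial, dotProduct_qmi_mulVec]

end Qmi

namespace memPi

variable {q r : ℕ} {N : Matrix (Fin q ⊕ Fin r) (Fin q ⊕ Fin r) ℝ}

lemma sumElim_dotProduct_mulVec (hN : memPi N) (p : Fin q → ℝ) (w : Fin r → ℝ) :
    Sum.elim p w ⬝ᵥ N *ᵥ Sum.elim p w = p ⬝ᵥ schurC N *ᵥ p +
      (w + (pinv N.toBlocks₂₂ * N.toBlocks₂₁) *ᵥ p) ⬝ᵥ
        N.toBlocks₂₂ *ᵥ (w + (pinv N.toBlocks₂₂ * N.toBlocks₂₁) *ᵥ p) := by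
  obtain ⟨hsymm, -, -, hker⟩ := hN
  rw [← fromBlocks_toBlocks N] at hsymm
  obtain ⟨-, hBC, -, hD⟩ := isSymm_fromBlocks_iff.mp hsymm
  obtain ⟨hDMD, -, hDM, -⟩ := pinv_spec (isHermitian_iff_isSymm.mpr hD)
  rw [schurC, ← hBC]
  conv_lhs => rw [← fromBlocks_toBlocks N, ← hBC]
  exact sumElim_dotProduct_fromBlocks_mulVec hD (mul_mul_transpose_eq_of_ker_le hD hDMD hDM hker)
    p w

end memPi

/-- For `N ∈ Π_{q,r}` and vectors `x ≠ 0`, `y` with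
`[x; y]ᵀ N [x; y] ≥ 0`, there exists `Z ∈ Z_r(N)` with `y = Zx`. -/
theorem stmt_10 {q r : ℕ} (N : Matrix (Fin q ⊕ Fin r) (Fin q ⊕ Fin r) ℝ) (hN : memPi N)
    (x : Fin q → ℝ) (y : Fin r → ℝ) (hx : x ≠ 0)
    (h : 0 ≤ Sum.elim x y ⬝ᵥ (N *ᵥ Sum.elim x y)) :
    ∃ Z ∈ ZrSet N, Z *ᵥ x = y := by
  set G := pinv N.toBlocks₂₂ * N.toBlocks₂₁
  set u := y + G *ᵥ x
  have hγ : u ⬝ᵥ N.toBlocks₂₂ *ᵥ u ≤ 0 := by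
    simpa only [star_trivial, neg_mulVec, dotProduct_neg, neg_nonneg] using
      hN.2.1.dotProduct_mulVec_nonneg u
  rw [hN.sumElim_dotProduct_mulVec] at h
  obtain ⟨a, hax, ha⟩ := hN.2.2.1.exists_dotProduct_eq_one_forall_nonneg hx hγ h
  have hZ : ∀ v, (vecMulVec u a - G) *ᵥ v + G *ᵥ v = (a ⬝ᵥ v) • u := fun v => by
    rw [sub_mulVec, sub_add_cancel, vecMulVec_mulVec, op_smul_eq_smul]
  refine ⟨vecMulVec u a - G, (mem_ZrSet_iff hN.1).mpr fun v => ?_, ?_⟩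
  · rw [hN.sumElim_dotProduct_mulVec, hZ, mulVec_smul, smul_dotProduct, dotProduct_smul,
      smul_eq_mul, smul_eq_mul]
    convert ha v using 2
    ring
  · rw [eq_sub_of_add_eq (hZ x), hax, one_smul, add_sub_cancel_right]
end
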